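/- arXiv:1002.1058 — 2 statements merged into one kernel-verified Lean document; each statement's English description precedes it below -/
import Mathlib

section
/- Let n ≥ 1, let Pₙ be the path graph on vertices Δ = {α₁,…,αₙ}, and let J₀ ⊆ Δ. For any interval [U,W] of the lattice Λ*(Pₙ,J₀), the following are equivalent: (1) [U,W] is relatively complemented; (2) [U,W] is atomic, i.e. every element of [U,W] is a join of atoms of [U,W]; (3) [U,W] is order-isomorphic to the Boolean lattice of all subsets of a set with |W| − |U| elements. -/
/-!
In `Λ*(Pₙ, J₀)` every cover adds a single vertex: if `U ⊊ A` are admissible, erasing a vertex of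
`A \ U` with a longest path in `A` to a vertex outside `J₀` leaves an admissible set. Hence the
atoms of `[U, W]` are the admissible sets `U ∪ {v}`, and since unions of admissible sets are
admissible, `[U, W]` is atomic exactly when every set between `U` and `W` is admissible, i.e. when
`[U, W]` is the Boolean interval of all of them. A Boolean interval is relatively complemented, and
a finite relatively complemented lattice is atomic: an atom below a relative complement of the join
of all atoms would lie below their meet. Conversely, if `[U, W]` is isomorphic to the subsets of a
`(|W| - |U|)`-set, it has as many elements as there are sets between `U` and `W`, so all of those
are admissible.
-/

open SimpleGraph Finset

/-- `ReachIn G U a b` : `b` is reachable from `a` within the subgraph of `G`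
induced on the vertex set `U`. -/
def ReachIn {n : ℕ} (G : SimpleGraph (Fin n)) (U : Finset (Fin n)) (a b : Fin n) : Prop :=
  Relation.ReflTransGen (fun x y => G.Adj x y ∧ x ∈ U ∧ y ∈ U) a b

/-- `U` is admissible (with respect to `J₀`) if no connected component of the
subgraph of `G` induced on `U` is entirely contained in `J₀`: every component
contains a vertex outside `J₀`. -/
def Admissible {n : ℕ} (G : SimpleGraph (Fin n)) (J₀ U : Finset (Fin n)) : Prop :=
  ∀ a ∈ U, ∃ b, ReachIn G U a b ∧ b ∉ J₀

/-- A subset `A` is connected if the induced subgraph on `A` is connected. -/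
def ConnIn {n : ℕ} (G : SimpleGraph (Fin n)) (A : Finset (Fin n)) : Prop :=
  ∀ a ∈ A, ∀ b ∈ A, ReachIn G A a b

theorem ReachIn.mono {n : ℕ} {G : SimpleGraph (Fin n)} {U V : Finset (Fin n)} (h : U ⊆ V)
    {a b : Fin n} (hr : ReachIn G U a b) : ReachIn G V a b := by
  unfold ReachIn at hr ⊢
  induction hr with
  | refl => exact Relation.ReflTransGen.refl
  | tail _ hxy ih => exact ih.tail ⟨hxy.1, h hxy.2.1, h hxy.2.2⟩

theorem admissible_empty {n : ℕ} (G : SimpleGraph (Fin n)) (J₀ : Finset (Fin n)) :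
    Admissible G J₀ ∅ := fun a ha => absurd ha (Finset.notMem_empty a)

theorem admissible_union {n : ℕ} {G : SimpleGraph (Fin n)} {J₀ U V : Finset (Fin n)}
    (hU : Admissible G J₀ U) (hV : Admissible G J₀ V) : Admissible G J₀ (U ∪ V) := by
  intro a ha
  rcases Finset.mem_union.mp ha with h | h
  · obtain ⟨b, hb, hbJ⟩ := hU a h
    exact ⟨b, hb.mono Finset.subset_union_left, hbJ⟩
  · obtain ⟨b, hb, hbJ⟩ := hV a h
    exact ⟨b, hb.mono Finset.subset_union_right, hbJ⟩

/-- `Λ*(G, J₀)` : the poset of admissible subsets, ordered by inclusion. -/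
def CrossSection {n : ℕ} (G : SimpleGraph (Fin n)) (J₀ : Finset (Fin n)) : Type :=
  {U : Finset (Fin n) // Admissible G J₀ U}

namespace CrossSection

variable {n : ℕ} {G : SimpleGraph (Fin n)} {J₀ : Finset (Fin n)}

instance : PartialOrder (CrossSection G J₀) :=
  inferInstanceAs (PartialOrder {U : Finset (Fin n) // Admissible G J₀ U})

instance : DecidableEq (CrossSection G J₀) :=
  inferInstanceAs (DecidableEq {U : Finset (Fin n) // Admissible G J₀ U})

noncomputable instance : Fintype (CrossSection G J₀) :=
  Fintype.ofInjective (Subtype.val : CrossSection G J₀ → Finset (Fin n)) Subtype.val_injective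

open Classical in
/-- The underlying set of the meet of two admissible sets: the largest admissible
subset contained in the intersection. -/
noncomputable def meetFinset (G : SimpleGraph (Fin n)) (J₀ : Finset (Fin n))
    (U V : Finset (Fin n)) : Finset (Fin n) :=
  ((U ∩ V).powerset.filter (fun W => Admissible G J₀ W)).sup id

theorem admissible_sup {s : Finset (Finset (Fin n))}
    (h : ∀ W ∈ s, Admissible G J₀ W) : Admissible G J₀ (s.sup id) :=
  Finset.sup_induction (by simpa using admissible_empty G J₀)
    (fun a ha b hb => by simpa using admissible_union ha hb) h

theorem admissible_meetFinset (G : SimpleGraph (Fin n)) (J₀ U V : Finset (Fin n)) :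
    Admissible G J₀ (meetFinset G J₀ U V) := by
  classical
  exact admissible_sup (fun W hW => (Finset.mem_filter.mp hW).2)

theorem meetFinset_subset_left (G : SimpleGraph (Fin n)) (J₀ U V : Finset (Fin n)) :
    meetFinset G J₀ U V ≤ U := by
  classical
  unfold meetFinset
  refine Finset.sup_le (fun W hW => ?_)
  have := Finset.mem_powerset.mp (Finset.mem_filter.mp hW).1
  exact fun x hx => (Finset.mem_inter.mp (this hx)).1

theorem meetFinset_subset_right (G : SimpleGraph (Fin n)) (J₀ U V : Finset (Fin n)) :
    meetFinset G J₀ U V ≤ V := by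
  classical
  unfold meetFinset
  refine Finset.sup_le (fun W hW => ?_)
  have := Finset.mem_powerset.mp (Finset.mem_filter.mp hW).1
  exact fun x hx => (Finset.mem_inter.mp (this hx)).2

theorem subset_meetFinset {G : SimpleGraph (Fin n)} {J₀ U V W : Finset (Fin n)}
    (hW : Admissible G J₀ W) (h1 : W ⊆ U) (h2 : W ⊆ V) : W ≤ meetFinset G J₀ U V := by
  classical
  unfold meetFinset
  exact Finset.le_sup (f := id)
    (Finset.mem_filter.mpr ⟨Finset.mem_powerset.mpr (Finset.subset_inter h1 h2), hW⟩)

noncomputable instance : Lattice (CrossSection G J₀) :=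
  { (inferInstance : PartialOrder (CrossSection G J₀)) with
    sup := fun U V => ⟨U.1 ∪ V.1, admissible_union U.2 V.2⟩
    le_sup_left := fun U V => show U.1 ⊆ U.1 ∪ V.1 from Finset.subset_union_left
    le_sup_right := fun U V => show V.1 ⊆ U.1 ∪ V.1 from Finset.subset_union_right
    sup_le := fun U V W h1 h2 => show U.1 ∪ V.1 ⊆ W.1 from Finset.union_subset h1 h2
    inf := fun U V => ⟨meetFinset G J₀ U.1 V.1, admissible_meetFinset G J₀ U.1 V.1⟩
    inf_le_left := fun U V => meetFinset_subset_left G J₀ U.1 V.1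
    inf_le_right := fun U V => meetFinset_subset_right G J₀ U.1 V.1
    le_inf := fun W U V h1 h2 => subset_meetFinset W.2 h1 h2 }

instance : OrderBot (CrossSection G J₀) where
  bot := ⟨∅, admissible_empty G J₀⟩
  bot_le := fun U => show (∅ : Finset (Fin n)) ⊆ U.1 from Finset.empty_subset _

@[simp] theorem sup_val (U V : CrossSection G J₀) : (U ⊔ V).1 = U.1 ∪ V.1 := rfl

@[simp] theorem inf_val (U V : CrossSection G J₀) : (U ⊓ V).1 = meetFinset G J₀ U.1 V.1 := rfl

end CrossSection

/-- The interval `[u,w]` is relatively complemented: for every subinterval `[x,y]`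
and every `z` in it there is a relative complement `z'`. -/
def RelCompInterval {α : Type*} [Lattice α] (u w : α) : Prop :=
  ∀ x y z : α, u ≤ x → x ≤ z → z ≤ y → y ≤ w →
    ∃ z', x ≤ z' ∧ z' ≤ y ∧ z ⊔ z' = y ∧ z ⊓ z' = x


section Intervals

variable {α : Type*}

def Equiv.finsetCongrOrderIso {β : Type*} (e : α ≃ β) : Finset α ≃o Finset β where
  toEquiv := e.finsetCongr
  map_rel_iff' := Finset.map_subset_map

def Finset.IccOrderIsoFinsetSdiff [DecidableEq α] {s t : Finset α} (h : s ⊆ t) :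
    Set.Icc s t ≃o Finset ↥(t \ s) :=
  Equiv.toOrderIso
    { toFun T := (T.1 \ s).subtype (· ∈ t \ s)
      invFun D := ⟨s ∪ D.map (Function.Embedding.subtype _), subset_union_left,
        union_subset h fun x hx => by
          obtain ⟨y, -, rfl⟩ := mem_map.1 hx
          exact (mem_sdiff.1 y.2).1⟩
      left_inv T := by
        obtain ⟨hsT, hTt⟩ := T.2
        ext x
        have := @hsT x
        have := @hTt x
        simp only [subtype_map, mem_sdiff, mem_union, mem_filter]
        tauto
      right_inv D := by
        ext x
        have := (mem_sdiff.1 x.2).2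
        simp only [mem_subtype, mem_sdiff, mem_union, mem_map, Function.Embedding.subtype_apply,
          SetLike.coe_eq_coe, exists_eq_right]
        tauto }
    (fun _ _ hTT' => subtype_mono (sdiff_subset_sdiff hTT' subset_rfl))
    (fun _ _ hDD' => union_subset_union_right (map_subset_map.2 hDD'))

noncomputable def Finset.IccOrderIsoFinsetFin [DecidableEq α] {s t : Finset α} (h : s ⊆ t) :
    Set.Icc s t ≃o Finset (Fin (t.card - s.card)) :=
  (Finset.IccOrderIsoFinsetSdiff h).trans
    (Fintype.equivFinOfCardEq
      (by rw [Fintype.card_coe, card_sdiff_of_subset h])).finsetCongrOrderIso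

variable [LinearOrder α] [LocallyFiniteOrder α]

theorem Finset.uIcc_subset_of_covBy {A : Finset α} {a b : α} (hab : a ⋖ b ∨ b ⋖ a) (ha : a ∈ A)
    (hb : b ∈ A) : uIcc a b ⊆ A := by
  intro z hz
  rcases hab with h | h
  · rw [uIcc_of_le h.le, mem_Icc] at hz
    rcases h.eq_or_eq hz.1 hz.2 with rfl | rfl <;> assumption
  · rw [uIcc_of_ge h.le, mem_Icc] at hz
    rcases h.eq_or_eq hz.1 hz.2 with rfl | rfl <;> assumption

theorem Finset.uIcc_ssubset_uIcc_of_mem {a b w : α} (hw : w ∈ uIcc a b) (hwa : w ≠ a) :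
    uIcc w b ⊂ uIcc a b := by
  refine (ssubset_iff_of_subset (uIcc_subset_uIcc_right hw)).2 ⟨a, left_mem_uIcc, fun ha => ?_⟩
  rw [mem_uIcc] at hw ha
  grind

end Intervals

section PathGraph

variable {n : ℕ}

theorem reachIn_pathGraph_iff {A : Finset (Fin n)} {x y : Fin n} (hx : x ∈ A) :
    ReachIn (pathGraph n) A x y ↔ uIcc x y ⊆ A := by
  refine ⟨fun h => ?_, fun h => ?_⟩
  · induction h with
    | refl => simpa using hx
    | tail _ hbc ih =>
      obtain ⟨hadj, hb, hc⟩ := hbc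
      exact uIcc_subset_uIcc_union_uIcc.trans
        (union_subset ih (uIcc_subset_of_covBy (hasse_adj.1 hadj) hb hc))
  · have hsucc : ∀ i ∈ Set.Ico x y ∪ Set.Ico y x,
        i ⋖ Order.succ i ∧ i ∈ A ∧ Order.succ i ∈ A := by
      rintro i (⟨hxi, hiy⟩ | ⟨hyi, hix⟩)
      · exact ⟨Order.covBy_succ_of_not_isMax (not_isMax_of_lt hiy),
          h (Icc_subset_uIcc (mem_Icc.2 ⟨hxi, hiy.le⟩)),
          h (Icc_subset_uIcc (mem_Icc.2 ⟨hxi.trans (Order.le_succ i), Order.succ_le_of_lt hiy⟩))⟩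
      · exact ⟨Order.covBy_succ_of_not_isMax (not_isMax_of_lt hix),
          h (Icc_subset_uIcc' (mem_Icc.2 ⟨hyi, hix.le⟩)),
          h (Icc_subset_uIcc' (mem_Icc.2 ⟨hyi.trans (Order.le_succ i), Order.succ_le_of_lt hix⟩))⟩
    refine reflTransGen_of_succ _ (fun i hi => ?_) (fun i hi => ?_)
    · obtain ⟨hcov, hi, hsi⟩ := hsucc i (Or.inl hi)
      exact ⟨hasse_adj.2 (Or.inl hcov), hi, hsi⟩
    · obtain ⟨hcov, hi, hsi⟩ := hsucc i (Or.inr hi)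
      exact ⟨hasse_adj.2 (Or.inr hcov), hsi, hi⟩

theorem admissible_pathGraph_iff {J₀ A : Finset (Fin n)} :
    Admissible (pathGraph n) J₀ A ↔ ∀ a ∈ A, ∃ b ∉ J₀, uIcc a b ⊆ A := by
  refine forall₂_congr fun a ha => exists_congr fun b => ?_
  rw [reachIn_pathGraph_iff ha, and_comm]

theorem exists_admissible_erase_of_ssubset {J₀ U A : Finset (Fin n)}
    (hU : Admissible (pathGraph n) J₀ U) (hA : Admissible (pathGraph n) J₀ A) (hUA : U ⊂ A) :
    ∃ w ∈ A \ U, Admissible (pathGraph n) J₀ (A.erase w) := by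
  classical
  rw [admissible_pathGraph_iff] at hU hA
  obtain ⟨v, hv⟩ := sdiff_nonempty.2 (not_subset_of_ssubset hUA)
  set P := ((A \ U) ×ˢ univ).filter fun p : Fin n × Fin n => p.2 ∉ J₀ ∧ uIcc p.1 p.2 ⊆ A
  have hP : P.Nonempty := by
    obtain ⟨b, hbJ, hvb⟩ := hA v (mem_sdiff.1 hv).1
    exact ⟨(v, b), by simp [P, hv, hbJ, hvb]⟩
  -- Erase a vertex `w ∉ U` with a longest path in `A` to an exit `b ∉ J₀`: if erasing `w` cut
  -- some `a ∉ U` off from all its exits, then `a` would reach `b` through `w` by a longer path.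
  obtain ⟨⟨w, b⟩, hwbP, hmax⟩ := P.exists_max_image (fun p => (uIcc p.1 p.2).card) hP
  simp only [P, mem_filter, mem_product, mem_univ, and_true] at hwbP
  obtain ⟨hw, hbJ, hwb⟩ := hwbP
  refine ⟨w, hw, admissible_pathGraph_iff.2 fun a ha => ?_⟩
  obtain ⟨haw, haA⟩ := mem_erase.1 ha
  by_cases haU : a ∈ U
  · obtain ⟨c, hcJ, hac⟩ := hU a haU
    exact ⟨c, hcJ, fun z hz =>
      mem_erase.2 ⟨fun h => (mem_sdiff.1 hw).2 (h ▸ hac hz), hUA.1 (hac hz)⟩⟩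
  obtain ⟨c, hcJ, hac⟩ := hA a haA
  by_cases hwc : w ∈ uIcc a c
  swap
  · exact ⟨c, hcJ, fun z hz => mem_erase.2 ⟨fun h => hwc (h ▸ hz), hac hz⟩⟩
  have hab : uIcc a b ⊆ A :=
    uIcc_subset_uIcc_union_uIcc.trans (union_subset ((uIcc_subset_uIcc_left hwc).trans hac) hwb)
  refine ⟨b, hbJ, fun z hz => mem_erase.2 ⟨?_, hab hz⟩⟩
  rintro rfl
  have hle := hmax (a, b) (by simp [P, haA, haU, hbJ, hab])
  exact (card_lt_card (uIcc_ssubset_uIcc_of_mem hz haw.symm)).not_ge hle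

end PathGraph

def AtomicInterval {α : Type*} [Lattice α] [OrderBot α] (u w : α) : Prop :=
  ∀ z : α, u ≤ z → z ≤ w → ∃ S : Finset α, (∀ a ∈ S, u ⋖ a ∧ a ≤ w) ∧ z = u ⊔ S.sup id

theorem RelCompInterval.atomicInterval {α : Type*} [Lattice α] [OrderBot α] [Finite α]
    {u w : α} (h : RelCompInterval u w) : AtomicInterval u w := by
  classical
  have := Fintype.ofFinite α
  intro z huz hzw
  set S := univ.filter fun a => u ⋖ a ∧ a ≤ z
  refine ⟨S, fun a ha => ⟨(mem_filter.1 ha).2.1, (mem_filter.1 ha).2.2.trans hzw⟩, ?_⟩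
  set m := u ⊔ S.sup id
  have hmz : m ≤ z := sup_le huz (Finset.sup_le fun a ha => (mem_filter.1 ha).2.2)
  obtain ⟨c, huc, hcz, hsup, hinf⟩ := h u z m le_rfl le_sup_left hmz hzw
  obtain rfl | hlt := huc.eq_or_lt
  · rwa [sup_eq_left.2 (le_sup_left : u ≤ m), eq_comm] at hsup
  -- an atom below the complement `c` of `m` would lie below `m ⊓ c = u`
  obtain ⟨a, hua, hac⟩ := exists_covBy_le_of_lt hlt
  have ham : a ≤ m :=
    le_sup_of_le_right (le_sup (f := id) (mem_filter.2 ⟨mem_univ a, hua, hac.trans hcz⟩))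
  exact absurd (hinf ▸ le_inf ham hac) hua.lt.not_ge

namespace CrossSection

variable {n : ℕ} {G : SimpleGraph (Fin n)} {J₀ : Finset (Fin n)}

theorem mem_val_sup {S : Finset (CrossSection G J₀)} {v : Fin n} :
    v ∈ (S.sup id).1 ↔ ∃ a ∈ S, v ∈ a.1 := by
  classical
  induction S using Finset.induction_on with
  | empty => exact iff_of_false (notMem_empty v) fun ⟨_, ha, _⟩ => notMem_empty _ ha
  | insert a S _ ih => simp [ih]

theorem covBy_mk_insert {U : CrossSection G J₀} {v : Fin n} (hv : v ∉ U.1)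
    (h : Admissible G J₀ (insert v U.1)) : U ⋖ ⟨insert v U.1, h⟩ :=
  CovBy.of_image (OrderEmbedding.subtype _) (Finset.covBy_insert hv)

theorem Icc_val_subset_admissible_of_insert {U W : CrossSection G J₀}
    (h : ∀ v ∈ W.1 \ U.1, Admissible G J₀ (insert v U.1)) :
    Set.Icc U.1 W.1 ⊆ {T | Admissible G J₀ T} := by
  classical
  rintro T ⟨hUT, hTW⟩
  have hT : T = U.1 ∪ ((T \ U.1).image fun v => insert v U.1).sup id := by
    ext x
    simp only [mem_union, mem_sup, mem_image, mem_sdiff, id]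
    refine ⟨fun hx => (em (x ∈ U.1)).imp id fun hxU =>
      ⟨_, ⟨x, ⟨hx, hxU⟩, rfl⟩, mem_insert_self x _⟩, ?_⟩
    rintro (hx | ⟨_, ⟨a, ⟨ha, -⟩, rfl⟩, hx⟩)
    · exact hUT hx
    · exact (mem_insert.1 hx).elim (· ▸ ha) (hUT ·)
  rw [hT]
  exact admissible_union U.2 (admissible_sup fun A hA => by
    obtain ⟨v, hv, rfl⟩ := mem_image.1 hA
    exact h v (mem_sdiff.2 ⟨hTW (mem_sdiff.1 hv).1, (mem_sdiff.1 hv).2⟩))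

def IccOrderIsoIccVal {U W : CrossSection G J₀} (h : Set.Icc U.1 W.1 ⊆ {T | Admissible G J₀ T}) :
    Set.Icc U W ≃o Set.Icc U.1 W.1 where
  toFun z := ⟨z.1.1, z.2⟩
  invFun T := ⟨⟨T.1, h T.2⟩, T.2⟩
  left_inv _ := rfl
  right_inv _ := rfl
  map_rel_iff' := Iff.rfl

variable {U W : CrossSection G J₀}

theorem Icc_val_subset_admissible_of_orderIso (hUW : U ≤ W)
    (e : Set.Icc U W ≃o Finset (Fin (W.1.card - U.1.card))) :
    Set.Icc U.1 W.1 ⊆ {T | Admissible G J₀ T} := by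
  let f : Set.Icc U W → Set.Icc U.1 W.1 := fun z => ⟨z.1.1, z.2⟩
  have hf : Function.Injective f := fun z z' h => by
    rw [Subtype.ext_iff] at h
    exact Subtype.ext (Subtype.ext h)
  have hcard : Nat.card (Set.Icc U W) = Nat.card (Set.Icc U.1 W.1) := by
    rw [Nat.card_congr e.toEquiv, ← coe_Icc, Nat.card_coe_set_eq, Set.ncard_coe_finset,
      card_Icc_finset hUW, Nat.card_eq_fintype_card, Fintype.card_finset, Fintype.card_fin]
  intro T hT
  obtain ⟨z, hz⟩ := ((Nat.bijective_iff_injective_and_card f).2 ⟨hf, hcard⟩).2 ⟨T, hT⟩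
  have hzT : z.1.1 = T := congrArg Subtype.val hz
  exact hzT ▸ z.1.2

theorem relCompInterval_of_Icc_val_subset (h : Set.Icc U.1 W.1 ⊆ {T | Admissible G J₀ T}) :
    RelCompInterval U W := by
  classical
  intro x y z hUx hxz hzy hyW
  have hadm : Admissible G J₀ (x.1 ∪ (y.1 \ z.1)) :=
    h ⟨Subset.trans hUx subset_union_left,
      union_subset (hxz.trans (hzy.trans hyW)) (sdiff_subset.trans hyW)⟩
  refine ⟨⟨_, hadm⟩, subset_union_left, union_subset (hxz.trans hzy) sdiff_subset, ?_,
    le_antisymm ?_ (le_inf hxz subset_union_left)⟩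
  · refine Subtype.ext (Subset.antisymm
      (union_subset hzy (union_subset (hxz.trans hzy) sdiff_subset)) fun v hv => ?_)
    by_cases hvz : v ∈ z.1
    · exact mem_union_left _ hvz
    · exact mem_union_right _ (mem_union_right _ (mem_sdiff.2 ⟨hv, hvz⟩))
  · intro v hv
    have hvz : v ∈ z.1 := (inf_le_left : z ⊓ ⟨_, hadm⟩ ≤ z) hv
    obtain hvx | hvyz := mem_union.1 ((inf_le_right : z ⊓ ⟨_, hadm⟩ ≤ ⟨_, hadm⟩) hv)
    · exact hvx
    · exact absurd hvz (mem_sdiff.1 hvyz).2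

theorem atomicInterval_of_Icc_val_subset (h : Set.Icc U.1 W.1 ⊆ {T | Admissible G J₀ T}) :
    AtomicInterval U W := by
  classical
  intro z hUz hzW
  refine ⟨univ.filter fun a => U ⋖ a ∧ a ≤ z,
    fun a ha => ⟨(mem_filter.1 ha).2.1, (mem_filter.1 ha).2.2.trans hzW⟩, le_antisymm ?_
    (sup_le hUz (Finset.sup_le fun a ha => (mem_filter.1 ha).2.2))⟩
  intro v hvz
  rw [sup_val, mem_union, mem_val_sup]
  refine (em (v ∈ U.1)).imp id fun hvU => ?_
  have hadm : Admissible G J₀ (insert v U.1) :=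
    h ⟨subset_insert v U.1, insert_subset (hzW hvz) (hUz.trans hzW)⟩
  exact ⟨⟨_, hadm⟩, mem_filter.2 ⟨mem_univ _, covBy_mk_insert hvU hadm, insert_subset hvz hUz⟩,
    mem_insert_self v U.1⟩

theorem val_covBy_val_of_covBy {U A : CrossSection (pathGraph n) J₀} (h : U ⋖ A) : U.1 ⋖ A.1 := by
  have hUA : U.1 ⊂ A.1 := h.lt
  obtain ⟨w, hw, hadm⟩ := exists_admissible_erase_of_ssubset U.2 A.2 hUA
  have hUc : U ≤ ⟨A.1.erase w, hadm⟩ := subset_erase.2 ⟨hUA.1, (mem_sdiff.1 hw).2⟩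
  have hcA : (⟨A.1.erase w, hadm⟩ : CrossSection (pathGraph n) J₀) < A :=
    erase_ssubset (mem_sdiff.1 hw).1
  obtain rfl : U = ⟨A.1.erase w, hadm⟩ := hUc.eq_of_not_lt fun hlt => h.2 hlt hcA
  exact erase_covBy (mem_sdiff.1 hw).1

end CrossSection

theorem AtomicInterval.admissible_insert {n : ℕ} {J₀ : Finset (Fin n)}
    {U W : CrossSection (pathGraph n) J₀} (hUW : U ≤ W) (h : AtomicInterval U W) :
    ∀ v ∈ W.1 \ U.1, Admissible (pathGraph n) J₀ (insert v U.1) := by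
  obtain ⟨S, hS, hW⟩ := h W hUW le_rfl
  intro v hv
  obtain ⟨hvW, hvU⟩ := mem_sdiff.1 hv
  rw [hW, CrossSection.sup_val, mem_union, CrossSection.mem_val_sup] at hvW
  obtain ⟨a, haS, hva⟩ := hvW.resolve_left hvU
  obtain ⟨w, -, hwa⟩ := (CrossSection.val_covBy_val_of_covBy (hS a haS).1).exists_finset_insert
  rw [← hwa] at hva
  obtain rfl := (mem_insert.1 hva).resolve_right hvU
  exact hwa ▸ a.2

theorem stmt_6_general (n : ℕ) (J₀ : Finset (Fin n))
    (U W : CrossSection (pathGraph n) J₀) (hUW : U ≤ W) :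
    (RelCompInterval U W ↔
      ∀ z : CrossSection (pathGraph n) J₀, U ≤ z → z ≤ W →
        ∃ S : Finset (CrossSection (pathGraph n) J₀),
          (∀ a ∈ S, U ⋖ a ∧ a ≤ W) ∧ z = U ⊔ S.sup id) ∧
    ((∀ z : CrossSection (pathGraph n) J₀, U ≤ z → z ≤ W →
        ∃ S : Finset (CrossSection (pathGraph n) J₀),
          (∀ a ∈ S, U ⋖ a ∧ a ≤ W) ∧ z = U ⊔ S.sup id) ↔
      Nonempty (Set.Icc U W ≃o Finset (Fin (W.1.card - U.1.card)))) := by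
  have hIcc : AtomicInterval U W → Set.Icc U.1 W.1 ⊆ {T | Admissible (pathGraph n) J₀ T} :=
    fun h => CrossSection.Icc_val_subset_admissible_of_insert (h.admissible_insert hUW)
  refine ⟨⟨RelCompInterval.atomicInterval, fun h => ?_⟩, fun h => ?_, fun ⟨e⟩ => ?_⟩
  · exact CrossSection.relCompInterval_of_Icc_val_subset (hIcc h)
  · exact ⟨(CrossSection.IccOrderIsoIccVal (hIcc h)).trans (Finset.IccOrderIsoFinsetFin hUW)⟩
  · exact CrossSection.atomicInterval_of_Icc_val_subset
      (CrossSection.Icc_val_subset_admissible_of_orderIso hUW e)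

theorem stmt_6 (n : ℕ) (hn : 1 ≤ n) (J₀ : Finset (Fin n))
    (U W : CrossSection (pathGraph n) J₀) (hUW : U ≤ W) :
    (RelCompInterval U W ↔
      ∀ z : CrossSection (pathGraph n) J₀, U ≤ z → z ≤ W →
        ∃ S : Finset (CrossSection (pathGraph n) J₀),
          (∀ a ∈ S, U ⋖ a ∧ a ≤ W) ∧ z = U ⊔ S.sup id) ∧
    ((∀ z : CrossSection (pathGraph n) J₀, U ≤ z → z ≤ W →
        ∃ S : Finset (CrossSection (pathGraph n) J₀),
          (∀ a ∈ S, U ⋖ a ∧ a ≤ W) ∧ z = U ⊔ S.sup id) ↔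
      Nonempty (Set.Icc U W ≃o Finset (Fin (W.1.card - U.1.card)))) :=
  stmt_6_general n J₀ U W hUW
end

section
/- Let m ≥ 3, let C_m be the cycle graph on m vertices, and let J₀ be a subset of the vertices of C_m such that the complement of J₀ contains two adjacent vertices. Then there exists a subset J₀' of the vertices of the path graph P_m on m vertices such that the lattice Λ*(C_m, J₀) is order-isomorphic to the lattice Λ*(P_m, J₀'). -/
open SimpleGraph Finset

/-!
Rotations of `C_m` are graph automorphisms, so we may assume that the two adjacent vertices
outside `J₀` are `-1` and `0`. The only edge of `C_m` missing from `P_m` joins `-1` and `0`, so a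
walk in an induced subgraph of `C_m` that uses it has already met a vertex outside `J₀`. Hence
admissibility for `C_m` and for `P_m` agree, with the same `J₀`.
-/

section

variable {n n' : ℕ} {G H : SimpleGraph (Fin n)} {G' : SimpleGraph (Fin n')}
  {J U : Finset (Fin n)}

theorem ReachIn.mono_graph (hGH : G ≤ H) {a b : Fin n} (h : ReachIn G U a b) :
    ReachIn H U a b :=
  Relation.ReflTransGen.mono (fun _ _ hxy => ⟨hGH hxy.1, hxy.2⟩) _ _ h

theorem ReachIn.map (e : G ≃g G') {a b : Fin n} (h : ReachIn G U a b) :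
    ReachIn G' (U.map e.toEquiv.toEmbedding) (e a) (e b) :=
  Relation.ReflTransGen.lift e (fun _ _ hxy =>
    ⟨e.map_adj_iff.2 hxy.1, mem_map_of_mem _ hxy.2.1, mem_map_of_mem _ hxy.2.2⟩) _ _ h

theorem Admissible.map (e : G ≃g G') (h : Admissible G J U) :
    Admissible G' (J.map e.toEquiv.toEmbedding) (U.map e.toEquiv.toEmbedding) := by
  intro a' ha'
  obtain ⟨a, ha, rfl⟩ := mem_map.1 ha'
  obtain ⟨b, hab, hb⟩ := h a ha
  exact ⟨e b, hab.map e, (mem_map' _).not.2 hb⟩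

theorem admissible_map_iff (e : G ≃g G') :
    Admissible G' (J.map e.toEquiv.toEmbedding) (U.map e.toEquiv.toEmbedding) ↔
      Admissible G J U := by
  refine ⟨fun h => ?_, Admissible.map e⟩
  simpa [Finset.map_map] using h.map e.symm

theorem ReachIn.reachIn_or_exists_notMem (hJ : ∀ x y, H.Adj x y → ¬G.Adj x y → x ∉ J)
    {a b : Fin n} (h : ReachIn H U a b) :
    ReachIn G U a b ∨ ∃ c, ReachIn G U a c ∧ c ∉ J := by
  induction h with
  | refl => exact .inl .refl
  | @tail x y _ hxy ih =>
    refine ih.elim (fun hax => ?_) .inr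
    by_cases hG : G.Adj x y
    · exact .inl (hax.tail ⟨hG, hxy.2⟩)
    · exact .inr ⟨x, hax, hJ x y hxy.1 hG⟩

theorem admissible_iff_of_le (hGH : G ≤ H) (hJ : ∀ x y, H.Adj x y → ¬G.Adj x y → x ∉ J) :
    Admissible G J U ↔ Admissible H J U := by
  refine ⟨fun h a ha => ?_, fun h a ha => ?_⟩
  · obtain ⟨b, hab, hb⟩ := h a ha
    exact ⟨b, hab.mono_graph hGH, hb⟩
  · obtain ⟨b, hab, hb⟩ := h a ha
    exact (hab.reachIn_or_exists_notMem hJ).elim (fun hab => ⟨b, hab, hb⟩) id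

def CrossSection.orderIsoOfEquiv (e : Fin n ≃ Fin n') {J' : Finset (Fin n')}
    (h : ∀ U, Admissible G' J' (U.map e.toEmbedding) ↔ Admissible G J U) :
    CrossSection G J ≃o CrossSection G' J' where
  toEquiv := e.finsetCongr.subtypeEquiv fun U => (h U).symm
  map_rel_iff' := map_subset_map

end

section cycleGraph

variable {m : ℕ} [NeZero m]

def cycleGraphAddRight (c : Fin m) : cycleGraph m ≃g cycleGraph m where
  toEquiv := Equiv.addRight c
  map_rel_iff' := by simp [cycleGraph_adj']

theorem Fin.eq_one_of_val_eq_one {w : Fin m} (hw : w.val = 1) : w = 1 :=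
  Fin.ext (by rw [hw, Fin.val_one', Nat.mod_eq_of_lt (hw ▸ w.isLt)])

theorem eq_add_one_or_eq_add_one_of_cycleGraph_adj {u v : Fin m}
    (h : (cycleGraph m).Adj u v) : u = v + 1 ∨ v = u + 1 := by
  rcases cycleGraph_adj'.1 h with h | h
  · exact .inl (sub_eq_iff_eq_add'.1 (Fin.eq_one_of_val_eq_one h))
  · exact .inr (sub_eq_iff_eq_add'.1 (Fin.eq_one_of_val_eq_one h))

theorem eq_zero_or_eq_neg_one_of_cycleGraph_adj {u v : Fin m} (h : (cycleGraph m).Adj u v)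
    (h' : ¬(pathGraph m).Adj u v) : u = 0 ∨ u = -1 := by
  rw [pathGraph_adj] at h'
  rcases cycleGraph_adj'.1 h with h | h
  · have huv : u < v := by
      by_contra! hvu
      rw [Fin.coe_sub_iff_le.2 hvu] at h
      omega
    rw [Fin.coe_sub_iff_lt.2 huv] at h
    exact .inl (Fin.ext (by rw [Fin.val_zero]; omega))
  · have hvu : v < u := by
      by_contra! huv
      rw [Fin.coe_sub_iff_le.2 huv] at h
      omega
    have hv : v = 0 := by
      rw [Fin.coe_sub_iff_lt.2 hvu] at h
      exact Fin.ext (by rw [Fin.val_zero]; omega)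
    have h1 := Fin.eq_one_of_val_eq_one h
    rw [hv, zero_sub, neg_eq_iff_eq_neg] at h1
    exact .inr h1

end cycleGraph

theorem stmt_18_general (m : ℕ) (J₀ : Finset (Fin m))
    (h : ∃ a b : Fin m, (cycleGraph m).Adj a b ∧ a ∉ J₀ ∧ b ∉ J₀) :
    ∃ J₀' : Finset (Fin m),
      Nonempty (CrossSection (cycleGraph m) J₀ ≃o CrossSection (pathGraph m) J₀') := by
  obtain ⟨a, b, hab, ha, hb⟩ := h
  have : NeZero m := ⟨a.pos.ne'⟩
  obtain ⟨x, hx, hx1⟩ : ∃ x, x ∉ J₀ ∧ x + 1 ∉ J₀ := by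
    rcases eq_add_one_or_eq_add_one_of_cycleGraph_adj hab with rfl | rfl
    exacts [⟨b, hb, ha⟩, ⟨a, ha, hb⟩]
  let e := cycleGraphAddRight (-(x + 1))
  have he1 : e (x + 1) = 0 := add_neg_cancel (x + 1)
  have he : e x = -1 := by simp [e, cycleGraphAddRight]
  refine ⟨J₀.map e.toEquiv.toEmbedding, ⟨CrossSection.orderIsoOfEquiv e.toEquiv fun U => ?_⟩⟩
  rw [admissible_iff_of_le pathGraph_le_cycleGraph]
  · exact admissible_map_iff e
  intro u v huv hpuv
  rcases eq_zero_or_eq_neg_one_of_cycleGraph_adj huv hpuv with rfl | rfl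
  · exact he1 ▸ (mem_map' _).not.2 hx1
  · exact he ▸ (mem_map' _).not.2 hx

theorem stmt_18 (m : ℕ) (hm : 3 ≤ m) (J₀ : Finset (Fin m))
    (h : ∃ a b : Fin m, (cycleGraph m).Adj a b ∧ a ∉ J₀ ∧ b ∉ J₀) :
    ∃ J₀' : Finset (Fin m),
      Nonempty (CrossSection (cycleGraph m) J₀ ≃o CrossSection (pathGraph m) J₀') :=
  stmt_18_general m J₀ h
end
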